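/- If C is u-bounded relative to B with parameters [n,k,d] and u ≥ d(1 + i/k), then the i-fold iterated construction Code(B,i) has minimum distance exactly dᵢ = d·∏_{j=1}^i (k+j), and is uᵢ-bounded relative to Basis(B,i) with uᵢ = u·∏_{j=1}^i (k+j−1) if and only if u ≥ d(1 + (i+1)/k). -/

import Mathlib

open scoped Classical in
noncomputable def wt {F : Type*} [Field F] {m : ℕ} (v : Fin m → F) : ℕ :=
  (Finset.univ.filter fun p => v p ≠ 0).card

/-- `d` is the minimum distance of the linear code `C`. -/
noncomputable def IsMinDist {F : Type*} [Field F] {m : ℕ} (C : Submodule F (Fin m → F)) (d : ℕ) : Prop :=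
  (∀ w ∈ C, w ≠ 0 → d ≤ wt w) ∧ ∃ w ∈ C, w ≠ 0 ∧ wt w = d

/-- The cyclic-shift vectors of Construction 3.2: `shiftVec n k a t` is the vector in
`F^{(k+1)n}` whose `(k+1)` blocks of size `n` are zero in block `t` and the vectors
`a 0, ..., a (k-1)` read cyclically in the remaining blocks. -/
def shiftVec {F : Type*} [Field F] (n k : ℕ) (a : Fin k → Fin n → F) (t : Fin (k + 1)) :
    Fin ((k + 1) * n) → F :=
  fun p =>
    if h : p.val / n = t.val then 0
    else
      have hn : 0 < n := by
        rcases Nat.eq_zero_or_pos n with h0 | h0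
        · exact absurd p.isLt (by simp [h0])
        · exact h0
      have hi : p.val / n < k + 1 :=
        Nat.div_lt_of_lt_mul (Nat.mul_comm (k + 1) n ▸ p.isLt)
      a ⟨(if t.val ≤ p.val / n then p.val / n - t.val else p.val / n + (k + 1) - t.val) - 1,
          by
            have ht := t.isLt
            generalize hq : p.val / n = q at h hi ⊢
            split_ifs with h2 <;> omega⟩
        ⟨p.val % n, Nat.mod_lt _ hn⟩

/-- `C = span a` is `u`-bounded relative to the ordered basis `a`, with minimum distance `d`:
all basis vectors have weight `u`, their sum has weight `d`, and `u ≥ d(1 + 1/k)`. -/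
noncomputable def UBounded {F : Type*} [Field F] {n k : ℕ} (a : Fin k → Fin n → F)
    (u d : ℕ) : Prop :=
  IsMinDist (Submodule.span F (Set.range a)) d ∧
  (∀ j, wt (a j) = u) ∧ wt (∑ j, a j) = d ∧ d * (k + 1) ≤ u * k

/-- Length of the code obtained after `i` applications of the construction. -/
def iterLen (n k : ℕ) : ℕ → ℕ
  | 0 => n
  | (i + 1) => (k + i + 1) * iterLen n k i

/-- `Basis(B, i)`: the basis obtained by `i` iterated applications of the construction. -/
def iterBasis {F : Type*} [Field F] (n k : ℕ) (a : Fin k → Fin n → F) :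
    (i : ℕ) → Fin (k + i) → Fin (iterLen n k i) → F
  | 0 => a
  | (i + 1) => shiftVec (iterLen n k i) (k + i) (iterBasis n k a i)

/-!
Split a vector of length `(k + 1) n` into `k + 1` blocks of length `n`. In block `s` of a
combination `∑ₜ cₜ • shiftVec a t`, the vector `a j` carries the coefficient `c (s - (j + 1))`
(arithmetic in `Fin (k + 1)`), so every block is a codeword of `span a`. If all blocks are
nonzero, the weight is at least `(k + 1) d`. If some block `s` vanishes, linear independence of
`a` kills every coefficient except `c s`, and the combination is a multiple of a single
`shiftVec a s`, of weight `u k ≥ (k + 1) d`. The sum of all `shiftVec a t` has every block equal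
to `∑ⱼ a j`, which realises `(k + 1) d`. Hence one step turns `[n, k, d]` with weights `u` into
`[(k + 1) n, k + 1, (k + 1) d]` with weights `u k`, and the `u`-boundedness inequality after `i`
steps reduces, after cancelling `∏_{j < i} (k + j + 1)`, to `d (k + i + 1) ≤ u k`.
-/

open Finset

section Weight

variable {F : Type*} [Field F] {m : ℕ}

theorem wt_eq_hammingNorm [DecidableEq F] (v : Fin m → F) : wt v = hammingNorm v := by
  unfold wt hammingNorm
  congr

theorem wt_eq_zero_iff {v : Fin m → F} : wt v = 0 ↔ v = 0 := by
  classical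
  rw [wt_eq_hammingNorm, hammingNorm_eq_zero]

theorem wt_smul {c : F} (hc : c ≠ 0) (v : Fin m → F) : wt (c • v) = wt v := by
  classical
  rw [wt_eq_hammingNorm, wt_eq_hammingNorm,
    hammingNorm_smul fun _ => IsSMulRegular.of_ne_zero hc]

theorem IsMinDist.pos {C : Submodule F (Fin m → F)} {d : ℕ} (h : IsMinDist C d) : 0 < d := by
  obtain ⟨w, -, hw, rfl⟩ := h.2
  exact Nat.pos_of_ne_zero (wt_eq_zero_iff.not.mpr hw)

end Weight

section Block

def block {α : Type*} {m n : ℕ} (v : Fin (m * n) → α) (s : Fin m) : Fin n → α :=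
  fun r => v (finProdFinEquiv (s, r))

theorem block_sum_smul {R M ι : Type*} [Semiring R] [AddCommMonoid M] [Module R M] [Fintype ι]
    {m n : ℕ} (c : ι → R) (v : ι → Fin (m * n) → M) (s : Fin m) :
    block (∑ t, c t • v t) s = ∑ t, c t • block (v t) s := by
  ext r
  simp [block, Finset.sum_apply]

theorem wt_eq_sum_wt_block {F : Type*} [Field F] {m n : ℕ} (v : Fin (m * n) → F) :
    wt v = ∑ s, wt (block v s) := by
  classical
  simp only [wt, Finset.card_filter]
  rw [← finProdFinEquiv.sum_comp, Fintype.sum_prod_type]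
  rfl

theorem finProdFinEquiv_val_div {m n : ℕ} (s : Fin m) (r : Fin n) :
    (finProdFinEquiv (s, r)).val / n = s.val := by
  have hn : 0 < n := r.pos
  rw [finProdFinEquiv_apply_val, Nat.add_mul_div_left _ _ hn, Nat.div_eq_of_lt r.isLt, zero_add]

theorem finProdFinEquiv_val_mod {m n : ℕ} (s : Fin m) (r : Fin n) :
    (finProdFinEquiv (s, r)).val % n = r.val := by
  rw [finProdFinEquiv_apply_val, Nat.add_mul_mod_self_left, Nat.mod_eq_of_lt r.isLt]

end Block

section ShiftVec

variable {F : Type*} [Field F] {n k : ℕ} (a : Fin k → Fin n → F)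

theorem block_shiftVec_self (t : Fin (k + 1)) : block (shiftVec n k a t) t = 0 := by
  ext r
  unfold block shiftVec
  rw [dif_pos (finProdFinEquiv_val_div t r)]
  rfl

theorem block_shiftVec_sub_succ (s : Fin (k + 1)) (j : Fin k) :
    block (shiftVec n k a (s - j.succ)) s = a j := by
  ext r
  have hne : s.val ≠ (s - j.succ).val := fun h =>
    Fin.succ_ne_zero j (sub_eq_self.mp (Fin.ext h).symm)
  unfold block shiftVec
  rw [dif_neg (by rw [finProdFinEquiv_val_div]; exact hne)]
  refine congr (congrArg a (Fin.ext ?_)) (Fin.ext (finProdFinEquiv_val_mod s r))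
  simp only [finProdFinEquiv_val_div]
  have hs := s.isLt
  rcases le_or_gt j.succ s with hjs | hjs
  · rw [Fin.coe_sub_iff_le.mpr hjs] at hne ⊢
    rw [Fin.le_def] at hjs
    simp only [Fin.val_succ] at hjs hne ⊢
    split_ifs <;> omega
  · rw [Fin.coe_sub_iff_lt.mpr hjs] at hne ⊢
    rw [Fin.lt_def] at hjs
    simp only [Fin.val_succ] at hjs hne ⊢
    split_ifs <;> omega

theorem block_sum_smul_shiftVec (c : Fin (k + 1) → F) (s : Fin (k + 1)) :
    block (∑ t, c t • shiftVec n k a t) s = ∑ j, c (s - j.succ) • a j := by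
  rw [block_sum_smul, ← Equiv.sum_comp (Equiv.subLeft s), Fin.sum_univ_succ]
  simp [block_shiftVec_self, block_shiftVec_sub_succ]

theorem Fin.exists_eq_sub_succ_of_ne {t s : Fin (k + 1)} (h : t ≠ s) :
    ∃ j : Fin k, t = s - j.succ := by
  obtain h0 | ⟨j, hj⟩ := Fin.eq_zero_or_eq_succ (s - t)
  · exact absurd (sub_eq_zero.mp h0).symm h
  · exact ⟨j, by rw [← hj, sub_sub_cancel]⟩

variable {a}

theorem eq_zero_of_block_sum_smul_shiftVec_eq_zero (ha : LinearIndependent F a)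
    {c : Fin (k + 1) → F} {s : Fin (k + 1)} (h : block (∑ t, c t • shiftVec n k a t) s = 0)
    {t : Fin (k + 1)} (hts : t ≠ s) : c t = 0 := by
  obtain ⟨j, rfl⟩ := Fin.exists_eq_sub_succ_of_ne hts
  rw [block_sum_smul_shiftVec] at h
  exact Fintype.linearIndependent_iff.mp ha _ h j

theorem linearIndependent_shiftVec (ha : LinearIndependent F a) (hk : 0 < k) :
    LinearIndependent F (shiftVec n k a) := by
  refine Fintype.linearIndependent_iff.mpr fun c hc t => ?_
  let j : Fin k := ⟨0, hk⟩
  refine eq_zero_of_block_sum_smul_shiftVec_eq_zero ha (s := t + j.succ) (by rw [hc]; rfl) ?_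
  simp

end ShiftVec

theorem mul_prod_range_add_one_eq_prod_range_mul (k i : ℕ) :
    k * ∏ j ∈ range i, (k + j + 1) = (∏ j ∈ range i, (k + j)) * (k + i) := by
  rw [← prod_range_succ, prod_range_succ', add_zero, mul_comm]
  rfl

theorem iterParams_le_iff (k i d u : ℕ) :
    d * (∏ j ∈ range i, (k + j + 1)) * (k + i + 1) ≤ u * (∏ j ∈ range i, (k + j)) * (k + i) ↔
      d * (k + i + 1) ≤ u * k := by
  have hP : 0 < ∏ j ∈ range i, (k + j + 1) := prod_pos fun j _ => Nat.succ_pos _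
  rw [mul_assoc u, ← mul_prod_range_add_one_eq_prod_range_mul, ← mul_assoc, mul_right_comm d,
    Nat.mul_le_mul_right_iff hP]

structure IsEquiweightBasis {F : Type*} [Field F] {n k : ℕ} (a : Fin k → Fin n → F)
    (u d : ℕ) : Prop where
  linearIndependent : LinearIndependent F a
  isMinDist : IsMinDist (Submodule.span F (Set.range a)) d
  wt_eq : ∀ j, wt (a j) = u
  wt_sum : wt (∑ j, a j) = d

namespace IsEquiweightBasis

variable {F : Type*} [Field F] {n k : ℕ} {a : Fin k → Fin n → F} {u d : ℕ}

theorem uBounded_iff (h : IsEquiweightBasis a u d) : UBounded a u d ↔ d * (k + 1) ≤ u * k :=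
  ⟨fun hb => hb.2.2.2, fun hud => ⟨h.isMinDist, h.wt_eq, h.wt_sum, hud⟩⟩

theorem wt_shiftVec (h : IsEquiweightBasis a u d) (t : Fin (k + 1)) :
    wt (shiftVec n k a t) = u * k := by
  have hblock : ∀ j : Fin k, block (shiftVec n k a t) (j.succ + t) = a j := fun j => by
    simpa using block_shiftVec_sub_succ a (j.succ + t) j
  rw [wt_eq_sum_wt_block, ← Equiv.sum_comp (Equiv.addRight t), Fin.sum_univ_succ]
  simp [block_shiftVec_self, hblock, h.wt_eq, wt_eq_zero_iff.mpr, mul_comm]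

theorem wt_sum_shiftVec (h : IsEquiweightBasis a u d) :
    wt (∑ t, shiftVec n k a t) = d * (k + 1) := by
  have hblock : ∀ s, block (∑ t, shiftVec n k a t) s = ∑ j, a j := fun s => by
    simpa using block_sum_smul_shiftVec a (fun _ => 1) s
  simp [wt_eq_sum_wt_block, hblock, h.wt_sum, mul_comm]

theorem le_wt_of_mem_span_shiftVec (h : IsEquiweightBasis a u d) (hud : d * (k + 1) ≤ u * k)
    {w : Fin ((k + 1) * n) → F} (hw : w ∈ Submodule.span F (Set.range (shiftVec n k a)))
    (hw0 : w ≠ 0) : d * (k + 1) ≤ wt w := by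
  obtain ⟨c, rfl⟩ := (Submodule.mem_span_range_iff_exists_fun F).mp hw
  by_cases hblocks : ∀ s, block (∑ t, c t • shiftVec n k a t) s ≠ 0
  · have hmem : ∀ s, block (∑ t, c t • shiftVec n k a t) s ∈ Submodule.span F (Set.range a) :=
      fun s => by
        rw [block_sum_smul_shiftVec]
        exact Submodule.sum_smul_mem _ _ fun j _ => Submodule.subset_span ⟨j, rfl⟩
    calc d * (k + 1) = ∑ _s : Fin (k + 1), d := by simp [mul_comm]
      _ ≤ _ := (sum_le_sum fun s _ => h.isMinDist.1 _ (hmem s) (hblocks s)).trans_eq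
          (wt_eq_sum_wt_block _).symm
  · push Not at hblocks
    obtain ⟨s, hs⟩ := hblocks
    have hsingle : ∑ t, c t • shiftVec n k a t = c s • shiftVec n k a s :=
      sum_eq_single s (fun t _ hts => by
        rw [eq_zero_of_block_sum_smul_shiftVec_eq_zero h.linearIndependent hs hts, zero_smul])
        (by simp)
    have hcs : c s ≠ 0 := fun hcs => hw0 (by rw [hsingle, hcs, zero_smul])
    rw [hsingle, wt_smul hcs, h.wt_shiftVec]
    exact hud

theorem shift (h : IsEquiweightBasis a u d) (hud : d * (k + 1) ≤ u * k) :
    IsEquiweightBasis (shiftVec n k a) (u * k) (d * (k + 1)) := by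
  have hd := h.isMinDist.pos
  have hk : 0 < k := Nat.pos_of_ne_zero fun hk => by subst hk; omega
  have hsum : ∑ t, shiftVec n k a t ≠ 0 := wt_eq_zero_iff.not.mp <| by
    rw [h.wt_sum_shiftVec]
    exact (Nat.mul_pos hd k.succ_pos).ne'
  exact {
    linearIndependent := linearIndependent_shiftVec h.linearIndependent hk
    isMinDist := ⟨fun _ => h.le_wt_of_mem_span_shiftVec hud, _,
      Submodule.sum_mem _ fun t _ => Submodule.subset_span ⟨t, rfl⟩, hsum, h.wt_sum_shiftVec⟩
    wt_eq := h.wt_shiftVec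
    wt_sum := h.wt_sum_shiftVec }

theorem iterate (h : IsEquiweightBasis a u d) {i : ℕ} (hi : d * (k + i) ≤ u * k) :
    IsEquiweightBasis (iterBasis n k a i) (u * ∏ j ∈ range i, (k + j))
      (d * ∏ j ∈ range i, (k + j + 1)) := by
  induction i with
  | zero =>
    simp only [prod_range_zero, mul_one]
    exact h
  | succ i ih =>
    have hstep := (ih (le_trans (by gcongr; omega) hi)).shift ((iterParams_le_iff k i d u).mpr hi)
    rw [prod_range_succ, prod_range_succ, ← mul_assoc, ← mul_assoc]
    exact hstep

end IsEquiweightBasis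

theorem iterCode_bounded_general (F : Type*) [Field F] (n k : ℕ)
    (a : Fin k → Fin n → F) (ha : LinearIndependent F a) (u d : ℕ)
    (hb : UBounded a u d) (i : ℕ) (hui : d * (k + i) ≤ u * k) :
    IsMinDist (Submodule.span F (Set.range (iterBasis n k a i)))
      (d * ∏ j ∈ Finset.range i, (k + j + 1)) ∧
    (UBounded (iterBasis n k a i) (u * ∏ j ∈ Finset.range i, (k + j))
        (d * ∏ j ∈ Finset.range i, (k + j + 1)) ↔ d * (k + i + 1) ≤ u * k) := by
  have h := (IsEquiweightBasis.mk ha hb.1 hb.2.1 hb.2.2.1).iterate hui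
  exact ⟨h.isMinDist, h.uBounded_iff.trans (iterParams_le_iff k i d u)⟩

theorem iterCode_bounded (F : Type*) [Field F] (n k : ℕ)
    (a : Fin k → Fin n → F) (ha : LinearIndependent F a) (u d : ℕ)
    (hb : UBounded a u d) (i : ℕ) (hi : 1 ≤ i) (hui : d * (k + i) ≤ u * k) :
    IsMinDist (Submodule.span F (Set.range (iterBasis n k a i)))
      (d * ∏ j ∈ Finset.range i, (k + j + 1)) ∧
    (UBounded (iterBasis n k a i) (u * ∏ j ∈ Finset.range i, (k + j))
        (d * ∏ j ∈ Finset.range i, (k + j + 1)) ↔ d * (k + i + 1) ≤ u * k) :=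
  iterCode_bounded_general F n k a ha u d hb i hui
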